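/- For every function f : [0,1]^d → ℝ, every integer t ≥ 1, every M ≥ 1 and every index i ∈ {0,…,k−1}: the constructed network is constant on the inner cell C_i with value f(π^i/t), i.e. f̂(x) = f(π^i/t) for all x ∈ C_i. -/

import Mathlib

open Finset MeasureTheory

noncomputable section

/-- The ReLU function σ(z) = max(0, z). -/
def relu (z : ℝ) : ℝ := max 0 z

/-- `digit d t i r` is the `r`-th digit (most significant first) of the base-(t+1)
representation of `i`, i.e. the vector π^i, so that `i = Σ_r (digit d t i r) * (t+1)^(d-1-r)`. -/
def digit (d t i : ℕ) (r : Fin d) : ℕ := i / (t + 1) ^ (d - 1 - (r : ℕ)) % (t + 1)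

/-- The grid point π^i / t ∈ [0,1]^d. -/
def gridPt (d t i : ℕ) : Fin d → ℝ := fun r => (digit d t i r : ℝ) / t

/-- A g-unit with coefficient `a` located at grid point `i`:
`x ↦ a · σ(Σ_r −M·σ(−x_r + π^i_r/t) + 1/t)`. -/
def gUnit (d t : ℕ) (M a : ℝ) (i : ℕ) (x : Fin d → ℝ) : ℝ :=
  a * relu ((∑ r : Fin d, -M * relu (-(x r) + gridPt d t i r)) + 1 / t)

/-- `net d t M f i` is the partial network `b + Σ_{j=1}^{i} ĝ_j` of the recursive
construction (with `b = f 0`). -/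
def net (d t : ℕ) (M : ℝ) (f : (Fin d → ℝ) → ℝ) : ℕ → (Fin d → ℝ) → ℝ
  | 0 => fun _ => f (fun _ => 0)
  | i + 1 => fun x =>
      net d t M f i x +
        gUnit d t M ((t : ℝ) * (f (gridPt d t (i + 1)) - net d t M f i (gridPt d t (i + 1))))
          (i + 1) x

/-- The coefficient `a_i = t·(f(π^i/t) − (b + Σ_{j=1}^{i−1} ĝ_j(π^i/t)))` of the
construction (meaningful for `i ≥ 1`). -/
def coef (d t : ℕ) (M : ℝ) (f : (Fin d → ℝ) → ℝ) (i : ℕ) : ℝ :=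
  (t : ℝ) * (f (gridPt d t i) - net d t M f (i - 1) (gridPt d t i))

/-- The g-unit `ĝ_i` of the construction. -/
def gHat (d t : ℕ) (M : ℝ) (f : (Fin d → ℝ) → ℝ) (i : ℕ) : (Fin d → ℝ) → ℝ :=
  gUnit d t M (coef d t M f i) i

/-- The constructed network `f̂(x) = b + Σ_{i=1}^{k−1} ĝ_i(x)`, `k = (t+1)^d`. -/
def fHat (d t : ℕ) (M : ℝ) (f : (Fin d → ℝ) → ℝ) (x : Fin d → ℝ) : ℝ :=
  f (fun _ => 0) + ∑ i ∈ Finset.Icc 1 ((t + 1) ^ d - 1), gHat d t M f i x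

/-- `f` is ρ-Lipschitz in 1-norm on the set `s`. -/
def LipOneNorm (d : ℕ) (ρ : ℝ) (s : Set (Fin d → ℝ)) (f : (Fin d → ℝ) → ℝ) : Prop :=
  ∀ x ∈ s, ∀ x' ∈ s, |f x - f x'| ≤ ρ * ∑ r : Fin d, |x r - x' r|

/-- The cell `C*_i = {x : π^i_r/t ≤ x_r ≤ π^i_r/t + 1/t ∀r}`. -/
def cellStar (d t i : ℕ) : Set (Fin d → ℝ) :=
  {x | ∀ r : Fin d, gridPt d t i r ≤ x r ∧ x r ≤ gridPt d t i r + 1 / t}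

/-- The inner cell `C_i = {x : π^i_r/t ≤ x_r ≤ π^i_r/t + 1/t − 1/(Mt) ∀r}`. -/
def cellInner (d t : ℕ) (M : ℝ) (i : ℕ) : Set (Fin d → ℝ) :=
  {x | ∀ r : Fin d, gridPt d t i r ≤ x r ∧ x r ≤ gridPt d t i r + (1 / t - 1 / (M * t))}

/-- The boundary region `C'_i = C*_i \ C_i`. -/
def cellBoundary (d t : ℕ) (M : ℝ) (i : ℕ) : Set (Fin d → ℝ) :=
  cellStar d t i \ cellInner d t M i


lemma digit_mod_aux (t e d n : ℕ) (he : e < d) :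
    (n % (t+1)^d) / (t+1)^e % (t+1) = n / (t+1)^e % (t+1) := by
  rw [← Nat.mod_mul_right_div_self, ← Nat.mod_mul_right_div_self,
      Nat.mod_mod_of_dvd _ (by rw [← pow_succ]; exact pow_dvd_pow (t+1) (by omega))]

lemma le_of_digit_le (t : ℕ) :
    ∀ d i j, i < (t+1)^d → j < (t+1)^d →
    (∀ r : Fin d, digit d t j r ≤ digit d t i r) → j ≤ i := by
  intro d
  induction d with
  | zero => intro i j hi hj _; simp at hi hj; omega
  | succ d ih =>
    intro i j hi hj h
    set W := (t+1)^d with hW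
    have hW0 : 0 < W := pow_pos (by omega) d
    have hiW : i / W < t + 1 := Nat.div_lt_of_lt_mul (by rw [hW, ← pow_succ]; exact hi)
    have hjW : j / W < t + 1 := Nat.div_lt_of_lt_mul (by rw [hW, ← pow_succ]; exact hj)
    have htop : j / W ≤ i / W := by
      have h0 := h ⟨0, by omega⟩
      simp only [digit] at h0
      have he : d + 1 - 1 - (0:ℕ) = d := by omega
      rw [he] at h0
      rwa [Nat.mod_eq_of_lt hiW, Nat.mod_eq_of_lt hjW] at h0
    have hlow : j % W ≤ i % W := by
      refine ih (i % W) (j % W) (Nat.mod_lt _ hW0) (Nat.mod_lt _ hW0) ?_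
      intro r
      have hr := h r.succ
      simp only [digit, Fin.val_succ] at hr ⊢
      have he1 : d + 1 - 1 - ((r:ℕ)+1) = d - 1 - (r:ℕ) := by omega
      rw [he1] at hr
      rw [digit_mod_aux t (d - 1 - (r:ℕ)) d i (by have := r.2; omega),
          digit_mod_aux t (d - 1 - (r:ℕ)) d j (by have := r.2; omega)]
      exact hr
    calc j = W * (j / W) + j % W := (Nat.div_add_mod j W).symm
      _ ≤ W * (i / W) + i % W := Nat.add_le_add (Nat.mul_le_mul_left W htop) hlow
      _ = i := Nat.div_add_mod i W

lemma gridPt_zero (d t : ℕ) : gridPt d t 0 = fun _ => (0:ℝ) := by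
  funext r; simp [gridPt, digit]

lemma gridPt_mem_inner (d t : ℕ) (ht : 1 ≤ t) (M : ℝ) (hM : 1 ≤ M) (i : ℕ) :
    gridPt d t i ∈ cellInner d t M i := by
  intro r
  have ht0 : (0:ℝ) < t := by exact_mod_cast ht
  have hM0 : (0:ℝ) < M := by linarith
  have h1 : 1 / (M * t) ≤ 1 / t := by
    apply div_le_div_of_nonneg_left one_pos.le ht0
    nlinarith
  refine ⟨le_refl _, ?_⟩
  linarith

lemma gUnit_eval (d t : ℕ) (ht : 1 ≤ t) (M : ℝ) (hM : 1 ≤ M) (a : ℝ) (i j : ℕ)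
    (x : Fin d → ℝ) (hx : x ∈ cellInner d t M i) :
    gUnit d t M a j x =
      if ∀ r : Fin d, digit d t j r ≤ digit d t i r then a / t else 0 := by
  have ht0 : (0:ℝ) < t := by exact_mod_cast ht
  have hM0 : (0:ℝ) < M := by linarith
  split_ifs with h
  · have hz : ∀ r : Fin d, -M * relu (-(x r) + gridPt d t j r) = 0 := by
      intro r
      have h1 : gridPt d t j r ≤ gridPt d t i r := by
        unfold gridPt; gcongr; exact_mod_cast h r
      have h2 : gridPt d t i r ≤ x r := (hx r).1
      have : relu (-(x r) + gridPt d t j r) = 0 := by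
        simp only [relu, max_eq_left_iff]; linarith
      rw [this, mul_zero]
    rw [gUnit, Finset.sum_congr rfl (fun r _ => hz r)]
    simp only [Finset.sum_const_zero, zero_add]
    rw [relu, max_eq_right (by positivity)]
    rw [mul_one_div]
  · push_neg at h
    obtain ⟨s, hs⟩ := h
    have hbound : ∀ r : Fin d, -M * relu (-(x r) + gridPt d t j r) ≤
        if r = s then -(1/(t:ℝ)) else 0 := by
      intro r
      by_cases hr : r = s
      · subst hr
        rw [if_pos rfl]
        have hdig : (digit d t i r : ℝ) + 1 ≤ digit d t j r := by exact_mod_cast hs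
        have hgr : gridPt d t i r + 1/t ≤ gridPt d t j r := by
          unfold gridPt
          rw [← add_div]
          gcongr
        have hxr := (hx r).2
        have h1 : (1:ℝ)/(M*t) ≤ -(x r) + gridPt d t j r := by linarith
        have hMt : (0:ℝ) < 1/(M*t) := by positivity
        have h2 : relu (-(x r) + gridPt d t j r) = -(x r) + gridPt d t j r := by
          rw [relu, max_eq_right]; linarith
        rw [h2]
        have h3 : M * ((1:ℝ)/(M*t)) = 1/t := by field_simp
        have h4 := mul_le_mul_of_nonneg_left h1 hM0.le
        linarith
      · simp only [if_neg hr]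
        have : 0 ≤ relu (-(x r) + gridPt d t j r) := le_max_left _ _
        nlinarith
    have hsum : (∑ r : Fin d, -M * relu (-(x r) + gridPt d t j r)) ≤ -(1/(t:ℝ)) := by
      calc (∑ r : Fin d, -M * relu (-(x r) + gridPt d t j r))
          ≤ ∑ r : Fin d, (if r = s then -(1/(t:ℝ)) else 0) :=
            Finset.sum_le_sum (fun r _ => hbound r)
        _ = -(1/(t:ℝ)) := by simp
    rw [gUnit, relu, max_eq_left (by linarith), mul_zero]

lemma net_zero (d t : ℕ) (M : ℝ) (f : (Fin d → ℝ) → ℝ) (x : Fin d → ℝ) :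
    net d t M f 0 x = f (fun _ => 0) := rfl

lemma net_succ (d t : ℕ) (M : ℝ) (f : (Fin d → ℝ) → ℝ) (n : ℕ) (x : Fin d → ℝ) :
    net d t M f (n+1) x = net d t M f n x +
      gUnit d t M ((t : ℝ) * (f (gridPt d t (n + 1)) - net d t M f n (gridPt d t (n + 1))))
        (n + 1) x := rfl

lemma net_eq_sum (d t : ℕ) (M : ℝ) (f : (Fin d → ℝ) → ℝ) (n : ℕ) (x : Fin d → ℝ) :
    net d t M f n x = f (fun _ => 0) + ∑ j ∈ Finset.Icc 1 n, gHat d t M f j x := by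
  induction n with
  | zero => simp [net_zero]
  | succ n ih =>
    rw [net_succ, ih, Finset.sum_Icc_succ_top (by omega : 1 ≤ n + 1)]
    simp only [gHat, coef, Nat.add_sub_cancel]
    ring

lemma net_self (d t : ℕ) (ht : 1 ≤ t) (M : ℝ) (hM : 1 ≤ M) (f : (Fin d → ℝ) → ℝ) (i : ℕ)
    (hi : i < (t+1)^d) :
    ∀ n, i ≤ n → n < (t+1)^d → net d t M f n (gridPt d t i) = f (gridPt d t i) := by
  have ht1 : (0:ℝ) < t := by exact_mod_cast ht
  have ht0 : (t:ℝ) ≠ 0 := ne_of_gt ht1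
  have hgrid := gridPt_mem_inner d t ht M hM i
  intro n
  induction n with
  | zero =>
    intro h0 _
    have : i = 0 := by omega
    subst this
    rw [gridPt_zero]
    exact net_zero d t M f _
  | succ n ih =>
    intro hin hnk
    rcases Nat.lt_or_ge i (n+1) with hlt | hge
    · rw [net_succ, ih (by omega) (by omega),
        gUnit_eval d t ht M hM _ i (n+1) _ hgrid, if_neg, add_zero]
      intro hcond
      have := le_of_digit_le t d i (n+1) hi hnk hcond
      omega
    · have : i = n + 1 := by omega
      subst this
      rw [net_succ, gUnit_eval d t ht M hM _ (n+1) (n+1) _ hgrid,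
        if_pos (fun r => le_refl _)]
      field_simp
      ring

/-- For every f, t ≥ 1, M ≥ 1 and index i ∈ {0,…,k−1}: the constructed
network is constant on the inner cell C_i with value f(π^i/t). -/
theorem stmt_6 (d t : ℕ) (hd : 1 ≤ d) (ht : 1 ≤ t) (M : ℝ) (hM : 1 ≤ M)
    (f : (Fin d → ℝ) → ℝ) :
    ∀ i < (t + 1) ^ d, ∀ x ∈ cellInner d t M i, fHat d t M f x = f (gridPt d t i) := by
  intro i hik x hx
  have hgrid := gridPt_mem_inner d t ht M hM i
  have hk1 : 1 ≤ (t+1)^d := Nat.one_le_pow _ _ (by omega)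
  have key : fHat d t M f x = fHat d t M f (gridPt d t i) := by
    unfold fHat
    congr 1
    refine Finset.sum_congr rfl (fun j _ => ?_)
    rw [gHat, gUnit_eval d t ht M hM _ i j x hx, gUnit_eval d t ht M hM _ i j _ hgrid]
  have h2 : fHat d t M f (gridPt d t i) = net d t M f ((t+1)^d - 1) (gridPt d t i) := by
    rw [net_eq_sum]
    rfl
  rw [key, h2, net_self d t ht M hM f i hik _ (by omega) (by omega)]

end
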